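/- Let g₀ : ℝⁿ → ℝ and g : ℝⁿ → ℝᵐ be twice continuously differentiable, and define the generalized Lagrangian L(q₀,q₁,q₂) := q₀·g₀(q₁) + ⟨q₂, g(q₁)⟩. Suppose q₀ : ℝ → ℝ, q₁ : ℝ → ℝⁿ, q₂ : ℝ → ℝᵐ, q₃ : ℝ → ℝⁿ, q₄ : ℝ → ℝᵐ, q₅ : ℝ → ℝ are differentiable and satisfy, for all t, the dynamical system (D): q₀' = u₀, q₁' = u₁, q₂' = u₂, q₃' = −[∂²_{q₁}L(q₀,q₁,q₂)]u₁ − u₀·∇g₀(q₁) − [Dg(q₁)]ᵀu₂, q₄' = [Dg(q₁)]u₁, q₅' = ⟨∇g₀(q₁), u₁⟩, for some functions u₀, u₁, u₂. If at some time t₀ the initial conditions q₃(t₀) = −∇_{q₁}L(q₀(t₀),q₁(t₀),q₂(t₀)), q₄(t₀) = g(q₁(t₀)), q₅(t₀) = g₀(q₁(t₀)) hold, then for all t: q₃(t) + ∇_{q₁}L(q₀(t),q₁(t),q₂(t)) = 0, q₄(t) = g(q₁(t)), and q₅(t) = g₀(q₁(t)). -/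

import Mathlib

open scoped RealInnerProductSpace
open ContinuousLinearMap

/-! Along a solution of (D), each of `q₃ + ∇_{q₁}L`, `q₄ - g(q₁)` and `q₅ - g₀(q₁)` has zero
derivative: for the last two this is the chain rule, and for the first one the velocity of `q₃`
prescribed by (D) is exactly minus the total derivative of `∇_{q₁}L(q₀, q₁, q₂)`, whose three terms
are its partial derivatives in `q₁`, `q₀` and `q₂`. Vanishing at `t₀`, they vanish for all times. -/

section Smoothness

variable {E F : Type*} [NormedAddCommGroup E] [InnerProductSpace ℝ E] [CompleteSpace E]
    [NormedAddCommGroup F] [InnerProductSpace ℝ F] [CompleteSpace F] {n : WithTop ℕ∞}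

/- Over `ℝ` the star-semilinear isometries `toDual` and `adjoint` are `ℝ`-linear, so composing
with them preserves smoothness. -/
theorem ContDiff.gradient {f : E → ℝ} (hf : ContDiff ℝ (n + 1) f) : ContDiff ℝ n (gradient f) :=
  ((InnerProductSpace.toDual ℝ E).symm : StrongDual ℝ E ≃ₗᵢ[ℝ] E).contDiff.comp
    (hf.fderiv_right le_rfl)

theorem ContDiff.adjoint_fderiv {f : E → F} (hf : ContDiff ℝ (n + 1) f) :
    ContDiff ℝ n fun x => adjoint (fderiv ℝ f x) :=
  (adjoint : (E →L[ℝ] F) ≃ₗᵢ[ℝ] (F →L[ℝ] E)).contDiff.comp (hf.fderiv_right le_rfl)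

end Smoothness

section Curves

variable {E F H : Type*} [NormedAddCommGroup E] [NormedSpace ℝ E]
    [NormedAddCommGroup F] [NormedSpace ℝ F] [NormedAddCommGroup H] [NormedSpace ℝ H]

theorem eq_of_hasDerivAt_eq {f g f' : ℝ → F} (hf : ∀ t, HasDerivAt f (f' t) t)
    (hg : ∀ t, HasDerivAt g (f' t) t) {t₀ : ℝ} (h : f t₀ = g t₀) : f = g :=
  eq_of_fderiv_eq (fun t => (hf t).differentiableAt) (fun t => (hg t).differentiableAt)
    (fun t => by rw [(hf t).hasFDerivAt.fderiv, (hg t).hasFDerivAt.fderiv]) t₀ h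

theorem hasDerivAt_smul_add_apply {G : E → F} {B : E → H →L[ℝ] F}
    {a : ℝ → ℝ} {x : ℝ → E} {y : ℝ → H} {a' : ℝ} {x' : E} {y' : H} {t : ℝ}
    (hG : DifferentiableAt ℝ G (x t)) (hB : DifferentiableAt ℝ B (x t))
    (ha : HasDerivAt a a' t) (hx : HasDerivAt x x' t) (hy : HasDerivAt y y' t) :
    HasDerivAt (fun s => a s • G (x s) + B (x s) (y s))
      (fderiv ℝ (fun z => a t • G z + B z (y t)) (x t) x' + a' • G (x t) + B (x t) y') t := by
  have hpartial : HasFDerivAt (fun z => a t • G z + B z (y t))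
      (a t • fderiv ℝ G (x t) + (fderiv ℝ B (x t)).flip (y t)) (x t) :=
    ((hG.hasFDerivAt.const_smul (a t)).add
      (hB.hasFDerivAt.clm_apply (hasFDerivAt_const (y t) (x t)))).congr_fderiv (by simp)
  rw [hpartial.fderiv]
  refine ((ha.smul (hG.hasFDerivAt.comp_hasDerivAt t hx)).add
    ((hB.hasFDerivAt.comp_hasDerivAt t hx).clm_apply hy)).congr_deriv ?_
  simp only [add_apply, smul_apply, flip_apply, Function.comp_apply]
  abel

end Curves

/-- **Integrals of motion of the dynamical system (D).**
If `(q₀,…,q₅)` are differentiable and obey the controlled dynamics (D) generated by the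
twice continuously differentiable data functions `g₀, g` of Problem (N), and if at some
time `t₀` the identities `q₃ = -∇_{q₁}L`, `q₄ = g(q₁)`, `q₅ = g₀(q₁)` hold, then they hold
for all times: every evolution of (D) started on the hypersurface defined by these three
integrals of motion remains on it. Here `∇_{q₁}L(a,x,y) = a • ∇g₀(x) + (Dg(x))ᵀ y` is
encoded by `gradL`, the Hessian `∂²_{q₁}L` as the Fréchet derivative of `x ↦ gradL a x y`,
and `(Dg)ᵀ` as the adjoint of the Fréchet derivative of `g`. -/
theorem integrals_of_motion_of_D {n m : ℕ}
    (g₀ : EuclideanSpace ℝ (Fin n) → ℝ)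
    (g : EuclideanSpace ℝ (Fin n) → EuclideanSpace ℝ (Fin m))
    (hg₀ : ContDiff ℝ 2 g₀) (hg : ContDiff ℝ 2 g)
    (gradL : ℝ → EuclideanSpace ℝ (Fin n) → EuclideanSpace ℝ (Fin m) →
      EuclideanSpace ℝ (Fin n))
    (hgradL : ∀ a x y, gradL a x y =
      a • gradient g₀ x + ContinuousLinearMap.adjoint (fderiv ℝ g x) y)
    (q₀ : ℝ → ℝ) (q₁ : ℝ → EuclideanSpace ℝ (Fin n)) (q₂ : ℝ → EuclideanSpace ℝ (Fin m))
    (q₃ : ℝ → EuclideanSpace ℝ (Fin n)) (q₄ : ℝ → EuclideanSpace ℝ (Fin m)) (q₅ : ℝ → ℝ)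
    (u₀ : ℝ → ℝ) (u₁ : ℝ → EuclideanSpace ℝ (Fin n)) (u₂ : ℝ → EuclideanSpace ℝ (Fin m))
    (hq₀ : ∀ t, HasDerivAt q₀ (u₀ t) t)
    (hq₁ : ∀ t, HasDerivAt q₁ (u₁ t) t)
    (hq₂ : ∀ t, HasDerivAt q₂ (u₂ t) t)
    (hq₃ : ∀ t, HasDerivAt q₃
      (-(fderiv ℝ (fun x => gradL (q₀ t) x (q₂ t)) (q₁ t) (u₁ t))
        - u₀ t • gradient g₀ (q₁ t)
        - ContinuousLinearMap.adjoint (fderiv ℝ g (q₁ t)) (u₂ t)) t)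
    (hq₄ : ∀ t, HasDerivAt q₄ (fderiv ℝ g (q₁ t) (u₁ t)) t)
    (hq₅ : ∀ t, HasDerivAt q₅ ⟪gradient g₀ (q₁ t), u₁ t⟫ t)
    (t₀ : ℝ)
    (hinit₃ : q₃ t₀ = -gradL (q₀ t₀) (q₁ t₀) (q₂ t₀))
    (hinit₄ : q₄ t₀ = g (q₁ t₀))
    (hinit₅ : q₅ t₀ = g₀ (q₁ t₀)) :
    ∀ t : ℝ,
      q₃ t + gradL (q₀ t) (q₁ t) (q₂ t) = 0 ∧
      q₄ t = g (q₁ t) ∧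
      q₅ t = g₀ (q₁ t) := by
  obtain rfl : gradL = fun a x y => a • gradient g₀ x + adjoint (fderiv ℝ g x) y :=
    funext fun a => funext fun x => funext fun y => hgradL a x y
  have hgradient : Differentiable ℝ (gradient g₀) :=
    (hg₀.gradient (n := 1)).differentiable one_ne_zero
  have hadjoint : Differentiable ℝ fun x => adjoint (fderiv ℝ g x) :=
    (hg.adjoint_fderiv (n := 1)).differentiable one_ne_zero
  have h₃ : q₃ = fun t => -(q₀ t • gradient g₀ (q₁ t) + adjoint (fderiv ℝ g (q₁ t)) (q₂ t)) :=
    eq_of_hasDerivAt_eq hq₃ (fun t =>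
      (hasDerivAt_smul_add_apply (hgradient _) (hadjoint _) (hq₀ t) (hq₁ t) (hq₂ t)).neg
        |>.congr_deriv (by abel)) hinit₃
  have h₄ : q₄ = fun t => g (q₁ t) :=
    eq_of_hasDerivAt_eq hq₄
      (fun t => (hg.differentiable two_ne_zero _).hasFDerivAt.comp_hasDerivAt t (hq₁ t)) hinit₄
  have h₅ : q₅ = fun t => g₀ (q₁ t) :=
    eq_of_hasDerivAt_eq hq₅ (fun t => by
      rw [inner_gradient_left]
      exact (hg₀.differentiable two_ne_zero _).hasFDerivAt.comp_hasDerivAt t (hq₁ t)) hinit₅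
  intro t
  exact ⟨by rw [h₃, neg_add_cancel], congrFun h₄ t, congrFun h₅ t⟩
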